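/- arXiv:2208.14880 — 5 statements merged into one kernel-verified Lean document; each statement's English description precedes it below -/
import Mathlib

section
/- Let μ be a finite measure and h : X → ℝ≥0 a bounded measurable function with ∫ h^q dμ > 0 for all q ≥ 0. Then the function g(q) = (∫ h^{q+1} dμ)/(∫ h^q dμ) is monotone increasing on [0,∞). -/
/-!
Hölder's inequality with exponents `1/α`, `1/β` shows that `q ↦ log ∫ h^q dμ` is convex on
`[0, ∞)`. For a convex function `φ` the increment `φ (q + 1) - φ q` is monotone in `q`, and the
ratio in question is `exp (φ (q + 1) - φ q)`.
-/

open MeasureTheory Set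

theorem ConvexOn.sub_le_sub_of_le {𝕜 : Type*} [Field 𝕜] [LinearOrder 𝕜] [IsStrictOrderedRing 𝕜]
    {s : Set 𝕜} {φ : 𝕜 → 𝕜} (hφ : ConvexOn 𝕜 s φ) {p q δ : 𝕜} (hp : p ∈ s) (hq : q ∈ s)
    (hpδ : p + δ ∈ s) (hqδ : q + δ ∈ s) (hδ : 0 < δ) (hpq : p ≤ q) :
    φ (p + δ) - φ p ≤ φ (q + δ) - φ q := by
  rcases hpq.eq_or_lt with rfl | hpq
  · rfl
  have left := hφ.secant_mono hp hpδ hqδ (by linarith) (by linarith) (by linarith)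
  have right := hφ.secant_mono hqδ hp hq (by linarith) (by linarith) hpq.le
  rw [← neg_div_neg_eq, neg_sub, neg_sub, ← neg_div_neg_eq (φ q - _), neg_sub, neg_sub] at right
  rw [add_sub_cancel_left] at left right
  exact (div_le_div_iff_of_pos_right hδ).1 (left.trans right)

section

variable {X : Type*} [MeasurableSpace X] {μ : Measure X} {f : X → ℝ}

theorem memLp_rpow_of_integrable_rpow_mul (hf : 0 ≤ f) (hfm : AEMeasurable f μ) {s r : ℝ}
    (hr : 0 < r) (hi : Integrable (fun x => f x ^ (s * r)) μ) :
    MemLp (fun x => f x ^ s) (ENNReal.ofReal r) μ := by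
  have hr₀ : ENNReal.ofReal r ≠ 0 := by simpa using hr
  rw [← memLp_norm_rpow_iff (hfm.pow_const s).aestronglyMeasurable hr₀ ENNReal.ofReal_ne_top,
    ENNReal.toReal_ofReal hr.le, ENNReal.div_self hr₀ ENNReal.ofReal_ne_top,
    memLp_one_iff_integrable]
  refine hi.congr (.of_forall fun x => ?_)
  simp only [Real.norm_of_nonneg (Real.rpow_nonneg (hf x) s), ← Real.rpow_mul (hf x)]

/-- Lyapunov's inequality: Hölder with exponents `1/α`, `1/β` applied to `f^(αa) * f^(βb)`. -/
theorem integral_rpow_le_rpow_mul_rpow (hf : 0 ≤ f) (hfm : AEMeasurable f μ) {a b α β : ℝ}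
    (ha : 0 ≤ a) (hb : 0 ≤ b) (hα : 0 < α) (hβ : 0 < β) (hαβ : α + β = 1)
    (hia : Integrable (fun x => f x ^ a) μ) (hib : Integrable (fun x => f x ^ b) μ) :
    ∫ x, f x ^ (α * a + β * b) ∂μ ≤ (∫ x, f x ^ a ∂μ) ^ α * (∫ x, f x ^ b ∂μ) ^ β := by
  have cancel {c : ℝ} (hc : c ≠ 0) (e : ℝ) : c * e * c⁻¹ = e := by
    rw [mul_comm c, mul_inv_cancel_right₀ hc]
  have holder := integral_mul_le_Lp_mul_Lq_of_nonneg (.inv_inv hα hβ hαβ)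
    (.of_forall fun x => Real.rpow_nonneg (hf x) (α * a))
    (.of_forall fun x => Real.rpow_nonneg (hf x) (β * b))
    (memLp_rpow_of_integrable_rpow_mul hf hfm (inv_pos.2 hα) (by rwa [cancel hα.ne']))
    (memLp_rpow_of_integrable_rpow_mul hf hfm (inv_pos.2 hβ) (by rwa [cancel hβ.ne']))
  simp only [← Real.rpow_mul (hf _), one_div, inv_inv, cancel hα.ne', cancel hβ.ne'] at holder
  simpa only [← Real.rpow_add_of_nonneg (hf _) (mul_nonneg hα.le ha) (mul_nonneg hβ.le hb)]
    using holder

theorem convexOn_log_integral_rpow (hf : 0 ≤ f) (hfm : AEMeasurable f μ)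
    (hpos : ∀ q : ℝ, 0 ≤ q → 0 < ∫ x, f x ^ q ∂μ)
    (hint : ∀ q : ℝ, 0 ≤ q → Integrable (fun x => f x ^ q) μ) :
    ConvexOn ℝ (Ici (0 : ℝ)) fun q => Real.log (∫ x, f x ^ q ∂μ) := by
  refine convexOn_iff_forall_pos.2 ⟨convex_Ici _, fun a ha b hb α β hα hβ hαβ => ?_⟩
  simp only [smul_eq_mul]
  calc Real.log (∫ x, f x ^ (α * a + β * b) ∂μ)
      ≤ Real.log ((∫ x, f x ^ a ∂μ) ^ α * (∫ x, f x ^ b ∂μ) ^ β) :=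
        Real.log_le_log (hpos _ (add_nonneg (mul_nonneg hα.le ha) (mul_nonneg hβ.le hb)))
          (integral_rpow_le_rpow_mul_rpow hf hfm ha hb hα hβ hαβ (hint a ha) (hint b hb))
    _ = α * Real.log (∫ x, f x ^ a ∂μ) + β * Real.log (∫ x, f x ^ b ∂μ) := by
        have hFa := hpos a ha
        have hFb := hpos b hb
        rw [Real.log_mul (by positivity) (by positivity), Real.log_rpow hFa, Real.log_rpow hFb]

end

theorem stmt_4_general {X : Type*} [MeasurableSpace X] (μ : Measure X)
    (h : X → ℝ) (hmeas : Measurable h) (hnonneg : ∀ x, 0 ≤ h x)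
    (hpos : ∀ q : ℝ, 0 ≤ q → 0 < ∫ x, h x ^ q ∂μ)
    (hint : ∀ q : ℝ, 0 ≤ q → Integrable (fun x => h x ^ q) μ) :
    MonotoneOn (fun q : ℝ => (∫ x, h x ^ (q + 1) ∂μ) / (∫ x, h x ^ q ∂μ))
      (Set.Ici 0) := by
  have hconv := convexOn_log_integral_rpow hnonneg hmeas.aemeasurable hpos hint
  have hratio (q : ℝ) (hq : 0 ≤ q) : (∫ x, h x ^ (q + 1) ∂μ) / (∫ x, h x ^ q ∂μ) =
      Real.exp (Real.log (∫ x, h x ^ (q + 1) ∂μ) - Real.log (∫ x, h x ^ q ∂μ)) := by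
    rw [Real.exp_sub, Real.exp_log (hpos _ (by positivity)), Real.exp_log (hpos q hq)]
  intro p hp q hq hpq
  simp only [hratio p hp, hratio q hq, Real.exp_le_exp]
  exact hconv.sub_le_sub_of_le hp hq (mem_Ici.2 (add_nonneg hp zero_le_one))
    (mem_Ici.2 (add_nonneg hq zero_le_one)) one_pos hpq

/-- g(q) = (∫ h^{q+1})/(∫ h^q) is monotone increasing on [0,∞). -/
theorem stmt_4 {X : Type*} [MeasurableSpace X] (μ : Measure X) [IsFiniteMeasure μ]
    (h : X → ℝ) (hmeas : Measurable h) (hnonneg : ∀ x, 0 ≤ h x)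
    (M : ℝ) (hbound : ∀ x, h x ≤ M)
    (hpos : ∀ q : ℝ, 0 ≤ q → 0 < ∫ x, h x ^ q ∂μ)
    (hint : ∀ q : ℝ, 0 ≤ q → Integrable (fun x => h x ^ q) μ) :
    MonotoneOn (fun q : ℝ => (∫ x, h x ^ (q + 1) ∂μ) / (∫ x, h x ^ q ∂μ))
      (Set.Ici 0) :=
  stmt_4_general μ h hmeas hnonneg hpos hint
end

section
/- The function ψ(x,y,z) = sin(2π(x+y)) − cos(2π(y−z)) − sin(2π(x+z)) on ℝ³ satisfies sup |ψ_−| = 3/2, where ψ_− = max(−ψ, 0) is the negative part of ψ. -/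
/-
With t = (α + β)/2, the sum sin α + sin β + cos (α + β) equals 2 sin t cos ((α - β)/2) + 1 - 2 sin² t,
which is at most 2|sin t| - 2 sin² t + 1 ≤ 3/2. Since
-ψ(x, y, z) = sin α + sin β + cos (α + β) for α = -2π(x + y), β = 2π(x + z),
this gives ψ ≥ -3/2, and α = β = π/6, i.e. (x, y, z) = (0, -1/12, 1/12), attains the bound.
-/

open Real

theorem Real.sin_add_sin_add_cos_add_le (α β : ℝ) : sin α + sin β + cos (α + β) ≤ 3 / 2 := by
  set t := (α + β) / 2
  have h_sum : sin α + sin β = 2 * sin t * cos ((α - β) / 2) := sin_add_sin α β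
  have h_cos : cos (α + β) = 1 - 2 * sin t ^ 2 := by
    rw [show α + β = 2 * t by ring, cos_two_mul, cos_sq']
    ring
  have h_abs : sin t * cos ((α - β) / 2) ≤ |sin t| := by
    calc sin t * cos ((α - β) / 2) ≤ |sin t * cos ((α - β) / 2)| := le_abs_self _
      _ = |sin t| * |cos ((α - β) / 2)| := abs_mul _ _
      _ ≤ |sin t| * 1 := by gcongr; exact abs_cos_le_one _
      _ = |sin t| := mul_one _
  rw [h_sum, h_cos, ← sq_abs (sin t)]
  nlinarith [sq_nonneg (|sin t| - 1 / 2)]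

noncomputable def psi (p : ℝ × ℝ × ℝ) : ℝ :=
  sin (2 * π * (p.1 + p.2.1)) - cos (2 * π * (p.2.1 - p.2.2)) - sin (2 * π * (p.1 + p.2.2))

theorem neg_psi_le (p : ℝ × ℝ × ℝ) : -psi p ≤ 3 / 2 := by
  obtain ⟨x, y, z⟩ := p
  have h := sin_add_sin_add_cos_add_le (-(2 * π * (x + y))) (2 * π * (x + z))
  rw [sin_neg, show -(2 * π * (x + y)) + 2 * π * (x + z) = -(2 * π * (y - z)) by ring,
    cos_neg] at h
  unfold psi
  linarith

theorem psi_eq_neg_three_halves : psi (0, -1 / 12, 1 / 12) = -(3 / 2) := by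
  unfold psi
  rw [show 2 * π * ((0 : ℝ) + -1 / 12) = -(π / 6) by ring,
    show 2 * π * ((-1 / 12 : ℝ) - 1 / 12) = -(π / 3) by ring,
    show 2 * π * ((0 : ℝ) + 1 / 12) = π / 6 by ring,
    sin_neg, cos_neg, sin_pi_div_six, cos_pi_div_three]
  norm_num

theorem isGreatest_range_max_neg_psi :
    IsGreatest (Set.range fun p => max (-psi p) 0) (3 / 2) := by
  refine ⟨⟨(0, -1 / 12, 1 / 12), ?_⟩, ?_⟩
  · show max (-psi (0, -1 / 12, 1 / 12)) 0 = 3 / 2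
    rw [psi_eq_neg_three_halves, neg_neg]
    norm_num
  · rintro _ ⟨p, rfl⟩
    exact max_le (neg_psi_le p) (by norm_num)

/-- sup |ψ₋| = 3/2 for ψ(x,y,z) = sin(2π(x+y)) − cos(2π(y−z)) − sin(2π(x+z)). -/
theorem stmt_7 :
    sSup (Set.range (fun p : ℝ × ℝ × ℝ =>
      max (-(sin (2*π*(p.1 + p.2.1)) - cos (2*π*(p.2.1 - p.2.2))
              - sin (2*π*(p.1 + p.2.2)))) 0)) = 3/2 :=
  isGreatest_range_max_neg_psi.csSup_eq
end

section
/- The function ψ(x,y,z) = sin(2π(x+y)) − cos(2π(y−z)) − sin(2π(x+z)) satisfies ψ(x,y,z) ≥ −3/2 for all (x,y,z) ∈ ℝ³. -/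
open Real

/-! With `s = sin ((a - c) / 2)` and `u = cos ((a + c) / 2)`, the sum-to-product and
half-angle formulas turn `sin a - sin c - cos (a - c)` into `2 s² + 2 s u - 1
= 2 (s + u / 2)² - u² / 2 - 1 ≥ -3/2`, since `u² ≤ 1`. -/

lemma sin_sub_sin_sub_cos_sub (a c : ℝ) :
    sin a - sin c - cos (a - c) =
      2 * sin ((a - c) / 2) * (sin ((a - c) / 2) + cos ((a + c) / 2)) - 1 := by
  have hcos : cos (a - c) = 1 - 2 * sin ((a - c) / 2) ^ 2 := by
    rw [← cos_two_mul_eq_one_sub, mul_div_cancel₀ _ two_ne_zero]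
  rw [sin_sub_sin, hcos]
  ring

lemma neg_three_halves_le_sin_sub_sin_sub_cos_sub (a c : ℝ) :
    -(3 / 2 : ℝ) ≤ sin a - sin c - cos (a - c) := by
  rw [sin_sub_sin_sub_cos_sub]
  nlinarith [sq_nonneg (2 * sin ((a - c) / 2) + cos ((a + c) / 2)),
    cos_sq_le_one ((a + c) / 2)]

/-- ψ(x,y,z) ≥ −3/2 for all (x,y,z) ∈ ℝ³. -/
theorem stmt_8 (x y z : ℝ) :
    -(3/2 : ℝ) ≤ sin (2*π*(x+y)) - cos (2*π*(y-z)) - sin (2*π*(x+z)) := by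
  have h := neg_three_halves_le_sin_sub_sin_sub_cos_sub (2*π*(x+y)) (2*π*(x+z))
  rw [show 2*π*(x+y) - 2*π*(x+z) = 2*π*(y-z) by ring] at h
  linarith
end

section
/- Let μ be a finite measure and a, b : X → ℝ≥0 bounded measurable functions with a, b ≤ M, a strictly positive on a set of positive measure, and suppose that for some fixed p ≥ 1, (∫ a^{p−1} dμ)/(∫ a^p dμ) + (∫ b^{p+1} dμ)/(∫ b^p dμ) < 2 (with all integrals positive). Then (∫ a^p log a dμ)/(∫ a^p dμ) − (∫ b^p log b dμ)/(∫ b^p dμ) > 0. -/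
/-!
Pointwise, `1 - 1/x ≤ log x ≤ x - 1` gives `a^p - a^(p-1) ≤ a^p log a` and
`b^p log b ≤ b^(p+1) - b^p`. Integrating and dividing by `∫ a^p`, `∫ b^p`, the difference of the
two normalised entropies is at least `2 - (∫ a^(p-1))/(∫ a^p) - (∫ b^(p+1))/(∫ b^p) > 0`.
-/

open MeasureTheory Real Set

namespace Real

lemma continuous_rpow_mul_log {p : ℝ} (hp : 1 ≤ p) : Continuous fun x : ℝ ↦ x ^ p * log x := by
  have hfactor : (fun x : ℝ ↦ x ^ p * log x) = fun x ↦ x ^ (p - 1) * (x * log x) := by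
    funext x
    rcases eq_or_ne x 0 with rfl | hx
    · simp
    · rw [rpow_sub_one hx]
      field_simp
  rw [hfactor]
  exact (continuous_rpow_const (by linarith)).mul continuous_mul_log

lemma rpow_sub_rpow_sub_one_le_rpow_mul_log {x p : ℝ} (hx : 0 ≤ x) (hp : p ≠ 0) :
    x ^ p - x ^ (p - 1) ≤ x ^ p * log x := by
  rcases hx.eq_or_lt with rfl | hx
  · simpa [zero_rpow hp] using rpow_nonneg le_rfl (p - 1)
  calc x ^ p - x ^ (p - 1) = x ^ p * (1 - x⁻¹) := by rw [rpow_sub_one hx.ne']; ring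
    _ ≤ x ^ p * log x := by gcongr; exact one_sub_inv_le_log_of_pos hx

lemma rpow_mul_log_le_rpow_add_one_sub_rpow {x p : ℝ} (hx : 0 ≤ x) (hp : p ≠ 0) :
    x ^ p * log x ≤ x ^ (p + 1) - x ^ p := by
  rcases hx.eq_or_lt with rfl | hx
  · simpa [zero_rpow hp] using rpow_nonneg le_rfl (p + 1)
  calc x ^ p * log x ≤ x ^ p * (x - 1) := by gcongr; exact log_le_sub_one_of_pos hx
    _ = x ^ (p + 1) - x ^ p := by rw [rpow_add_one hx.ne']; ring

end Real

section

variable {X : Type*} [MeasurableSpace X] {μ : Measure X} [IsFiniteMeasure μ]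

theorem Continuous.integrable_comp_of_mem_compact {E : Type*} [NormedAddCommGroup E]
    {g : ℝ → E} (hg : Continuous g) {f : X → ℝ} (hf : Measurable f) {K : Set ℝ}
    (hK : IsCompact K) (hfK : ∀ x, f x ∈ K) : Integrable (fun x ↦ g (f x)) μ := by
  obtain ⟨C, hC⟩ := hK.exists_bound_of_continuousOn hg.continuousOn
  exact .of_bound (hg.comp_aestronglyMeasurable hf.aestronglyMeasurable) C
    (ae_of_all _ fun x ↦ hC _ (hfK x))

variable {f : X → ℝ} {M p : ℝ}

theorem one_sub_div_le_integral_rpow_mul_log_div (hf : Measurable f) (hfM : ∀ x, f x ∈ Icc 0 M)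
    (hp : 1 ≤ p) (hI : 0 < ∫ x, f x ^ p ∂μ) :
    1 - (∫ x, f x ^ (p - 1) ∂μ) / (∫ x, f x ^ p ∂μ)
      ≤ (∫ x, f x ^ p * log (f x) ∂μ) / (∫ x, f x ^ p ∂μ) := by
  have hp_int : Integrable (fun x ↦ f x ^ p) μ :=
    (continuous_rpow_const (by linarith)).integrable_comp_of_mem_compact hf isCompact_Icc hfM
  have hp_sub_int : Integrable (fun x ↦ f x ^ (p - 1)) μ :=
    (continuous_rpow_const (by linarith)).integrable_comp_of_mem_compact hf isCompact_Icc hfM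
  have hlog_int : Integrable (fun x ↦ f x ^ p * log (f x)) μ :=
    (continuous_rpow_mul_log hp).integrable_comp_of_mem_compact hf isCompact_Icc hfM
  have hintegral : (∫ x, f x ^ p ∂μ) - ∫ x, f x ^ (p - 1) ∂μ ≤ ∫ x, f x ^ p * log (f x) ∂μ := by
    rw [← integral_sub hp_int hp_sub_int]
    exact integral_mono (hp_int.sub hp_sub_int) hlog_int fun x ↦
      rpow_sub_rpow_sub_one_le_rpow_mul_log (hfM x).1 (by linarith)
  rw [one_sub_div hI.ne']
  gcongr

theorem integral_rpow_mul_log_div_le_div_sub_one (hf : Measurable f) (hfM : ∀ x, f x ∈ Icc 0 M)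
    (hp : 1 ≤ p) (hI : 0 < ∫ x, f x ^ p ∂μ) :
    (∫ x, f x ^ p * log (f x) ∂μ) / (∫ x, f x ^ p ∂μ)
      ≤ (∫ x, f x ^ (p + 1) ∂μ) / (∫ x, f x ^ p ∂μ) - 1 := by
  have hp_int : Integrable (fun x ↦ f x ^ p) μ :=
    (continuous_rpow_const (by linarith)).integrable_comp_of_mem_compact hf isCompact_Icc hfM
  have hp_add_int : Integrable (fun x ↦ f x ^ (p + 1)) μ :=
    (continuous_rpow_const (by linarith)).integrable_comp_of_mem_compact hf isCompact_Icc hfM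
  have hlog_int : Integrable (fun x ↦ f x ^ p * log (f x)) μ :=
    (continuous_rpow_mul_log hp).integrable_comp_of_mem_compact hf isCompact_Icc hfM
  have hintegral : ∫ x, f x ^ p * log (f x) ∂μ ≤ (∫ x, f x ^ (p + 1) ∂μ) - ∫ x, f x ^ p ∂μ := by
    rw [← integral_sub hp_add_int hp_int]
    exact integral_mono hlog_int (hp_add_int.sub hp_int) fun x ↦
      rpow_mul_log_le_rpow_add_one_sub_rpow (hfM x).1 (by linarith)
  rw [div_sub_one hI.ne']
  gcongr

end

theorem stmt_14_general {X : Type*} [MeasurableSpace X] (μ : Measure X) [IsFiniteMeasure μ]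
    (a b : X → ℝ) (hameas : Measurable a) (hbmeas : Measurable b)
    (hanonneg : ∀ x, 0 ≤ a x) (hbnonneg : ∀ x, 0 ≤ b x)
    (M : ℝ) (haM : ∀ x, a x ≤ M) (hbM : ∀ x, b x ≤ M)
    (p : ℝ) (hp : 1 ≤ p)
    (hpos1 : 0 < ∫ x, a x ^ p ∂μ) (hpos2 : 0 < ∫ x, b x ^ p ∂μ)
    (hratio : (∫ x, a x ^ (p - 1) ∂μ) / (∫ x, a x ^ p ∂μ)
            + (∫ x, b x ^ (p + 1) ∂μ) / (∫ x, b x ^ p ∂μ) < 2) :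
    0 < (∫ x, a x ^ p * log (a x) ∂μ) / (∫ x, a x ^ p ∂μ)
      - (∫ x, b x ^ p * log (b x) ∂μ) / (∫ x, b x ^ p ∂μ) := by
  have ha := one_sub_div_le_integral_rpow_mul_log_div hameas
    (fun x ↦ ⟨hanonneg x, haM x⟩) hp hpos1
  have hb := integral_rpow_mul_log_div_le_div_sub_one hbmeas
    (fun x ↦ ⟨hbnonneg x, hbM x⟩) hp hpos2
  linarith

/-- If (∫ a^{p−1})/(∫ a^p) + (∫ b^{p+1})/(∫ b^p) < 2 then
    (∫ a^p log a)/(∫ a^p) − (∫ b^p log b)/(∫ b^p) > 0. -/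
theorem stmt_14 {X : Type*} [MeasurableSpace X] (μ : Measure X) [IsFiniteMeasure μ]
    (a b : X → ℝ) (hameas : Measurable a) (hbmeas : Measurable b)
    (hanonneg : ∀ x, 0 ≤ a x) (hbnonneg : ∀ x, 0 ≤ b x)
    (M : ℝ) (haM : ∀ x, a x ≤ M) (hbM : ∀ x, b x ≤ M)
    (hapos : 0 < μ {x | 0 < a x})
    (p : ℝ) (hp : 1 ≤ p)
    (hpos1 : 0 < ∫ x, a x ^ p ∂μ) (hpos2 : 0 < ∫ x, b x ^ p ∂μ)
    (hpos3 : 0 < ∫ x, a x ^ (p - 1) ∂μ) (hpos4 : 0 < ∫ x, b x ^ (p + 1) ∂μ)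
    (hratio : (∫ x, a x ^ (p - 1) ∂μ) / (∫ x, a x ^ p ∂μ)
            + (∫ x, b x ^ (p + 1) ∂μ) / (∫ x, b x ^ p ∂μ) < 2) :
    0 < (∫ x, a x ^ p * log (a x) ∂μ) / (∫ x, a x ^ p ∂μ)
      - (∫ x, b x ^ p * log (b x) ∂μ) / (∫ x, b x ^ p ∂μ) :=
  stmt_14_general μ a b hameas hbmeas hanonneg hbnonneg M haM hbM p hp hpos1 hpos2 hratio
end

section
/- Let μ be a finite measure and h : X → ℝ≥0 bounded measurable with ∫ h^p dμ ∈ (0,∞) for all p ≥ 0. Then the function F(p) = (∫ h^p dμ)/(∫ h^{p−1} dμ) defined for p ≥ 1 satisfies F(p) ≤ F(p+ε) for all ε > 0 and p ≥ 1. -/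
/-!
The moment function `q ↦ ∫ h ^ q` is log-convex, by Hölder's inequality. Writing `p` and
`p + ε - 1` as convex combinations of `p - 1` and `p + ε` with swapped weights and multiplying the
two Hölder bounds gives `I(p) I(p + ε - 1) ≤ I(p - 1) I(p + ε)`, which is the claimed monotonicity
of the ratio after clearing the (positive) denominators.
-/

open MeasureTheory
open scoped ENNReal

section LogConvexity

variable {X : Type*} [MeasurableSpace X] {μ : Measure X}

theorem ENNReal.lintegral_rpow_convex_comb_le {f : X → ℝ≥0∞} (hf : AEMeasurable f μ)
    {a b s t : ℝ} (ha : 0 ≤ a) (hb : 0 ≤ b) (hs : 0 ≤ s) (ht : 0 ≤ t) (hst : s + t = 1) :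
    ∫⁻ x, f x ^ (s * a + t * b) ∂μ ≤ (∫⁻ x, f x ^ a ∂μ) ^ s * (∫⁻ x, f x ^ b ∂μ) ^ t := by
  have hpow : ∀ x, f x ^ (s * a + t * b) = (f x ^ a) ^ s * (f x ^ b) ^ t := fun x => by
    rw [ENNReal.rpow_add_of_nonneg _ _ (mul_nonneg hs ha) (mul_nonneg ht hb),
      ← ENNReal.rpow_mul, ← ENNReal.rpow_mul, mul_comm a, mul_comm b]
  simpa only [hpow] using
    ENNReal.lintegral_mul_norm_pow_le (hf.pow_const a) (hf.pow_const b) hs ht hst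

theorem ENNReal.lintegral_rpow_mul_lintegral_rpow_le {f : X → ℝ≥0∞} (hf : AEMeasurable f μ)
    {a b c d : ℝ} (ha : 0 ≤ a) (hab : a ≤ b) (hbd : b ≤ d) (hsum : b + c = a + d) :
    (∫⁻ x, f x ^ b ∂μ) * (∫⁻ x, f x ^ c ∂μ) ≤ (∫⁻ x, f x ^ a ∂μ) * (∫⁻ x, f x ^ d ∂μ) := by
  rcases (hab.trans hbd).eq_or_lt with rfl | had
  · obtain rfl : b = a := le_antisymm hbd hab
    obtain rfl : c = b := by linarith
    rfl
  set s := (d - b) / (d - a)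
  set t := (b - a) / (d - a)
  have hda : d - a ≠ 0 := (sub_pos.2 had).ne'
  have hs : 0 ≤ s := div_nonneg (by linarith) (by linarith)
  have ht : 0 ≤ t := div_nonneg (by linarith) (by linarith)
  have hst : s + t = 1 := by simp only [s, t]; field_simp; ring
  have hb : b = s * a + t * d := by simp only [s, t]; field_simp; ring
  have hc : c = t * a + s * d := by linear_combination hsum - hb - (a + d) * hst
  have hd : 0 ≤ d := by linarith
  calc (∫⁻ x, f x ^ b ∂μ) * (∫⁻ x, f x ^ c ∂μ)
      ≤ ((∫⁻ x, f x ^ a ∂μ) ^ s * (∫⁻ x, f x ^ d ∂μ) ^ t)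
          * ((∫⁻ x, f x ^ a ∂μ) ^ t * (∫⁻ x, f x ^ d ∂μ) ^ s) := by
        rw [hb, hc]
        exact mul_le_mul' (lintegral_rpow_convex_comb_le hf ha hd hs ht hst)
          (lintegral_rpow_convex_comb_le hf ha hd ht hs (by linarith))
    _ = (∫⁻ x, f x ^ a ∂μ) ^ (s + t) * (∫⁻ x, f x ^ d ∂μ) ^ (t + s) := by
        rw [ENNReal.rpow_add_of_nonneg _ _ hs ht, ENNReal.rpow_add_of_nonneg _ _ ht hs]
        ring
    _ = (∫⁻ x, f x ^ a ∂μ) * (∫⁻ x, f x ^ d ∂μ) := by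
        rw [add_comm t, hst, ENNReal.rpow_one, ENNReal.rpow_one]

theorem integral_rpow_eq_toReal_lintegral {h : X → ℝ} (hm : AEMeasurable h μ)
    (h0 : ∀ x, 0 ≤ h x) {q : ℝ} (hq : 0 ≤ q) :
    ∫ x, h x ^ q ∂μ = (∫⁻ x, ENNReal.ofReal (h x) ^ q ∂μ).toReal := by
  rw [integral_eq_lintegral_of_nonneg_ae (ae_of_all _ fun x => Real.rpow_nonneg (h0 x) q)
    (hm.pow_const q).aestronglyMeasurable]
  simp only [ENNReal.ofReal_rpow_of_nonneg (h0 _) hq]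

theorem lintegral_ofReal_rpow_ne_top {h : X → ℝ} (h0 : ∀ x, 0 ≤ h x) {q : ℝ} (hq : 0 ≤ q)
    (hi : Integrable (fun x => h x ^ q) μ) :
    ∫⁻ x, ENNReal.ofReal (h x) ^ q ∂μ ≠ ⊤ := by
  simpa only [ENNReal.ofReal_rpow_of_nonneg (h0 _) hq] using hi.lintegral_lt_top.ne

theorem integral_rpow_mul_integral_rpow_le {h : X → ℝ} (hm : AEMeasurable h μ)
    (h0 : ∀ x, 0 ≤ h x) {a b c d : ℝ} (ha : 0 ≤ a) (hab : a ≤ b) (hbd : b ≤ d)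
    (hsum : b + c = a + d) (hia : Integrable (fun x => h x ^ a) μ)
    (hid : Integrable (fun x => h x ^ d) μ) :
    (∫ x, h x ^ b ∂μ) * (∫ x, h x ^ c ∂μ) ≤ (∫ x, h x ^ a ∂μ) * (∫ x, h x ^ d ∂μ) := by
  have hd : 0 ≤ d := by linarith
  rw [integral_rpow_eq_toReal_lintegral hm h0 (ha.trans hab),
    integral_rpow_eq_toReal_lintegral hm h0 (by linarith : 0 ≤ c),
    integral_rpow_eq_toReal_lintegral hm h0 ha, integral_rpow_eq_toReal_lintegral hm h0 hd,
    ← ENNReal.toReal_mul, ← ENNReal.toReal_mul]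
  exact ENNReal.toReal_mono
    (ENNReal.mul_ne_top (lintegral_ofReal_rpow_ne_top h0 ha hia)
      (lintegral_ofReal_rpow_ne_top h0 hd hid))
    (ENNReal.lintegral_rpow_mul_lintegral_rpow_le (ENNReal.measurable_ofReal.comp_aemeasurable hm)
      ha hab hbd hsum)

end LogConvexity

theorem stmt_16_general {X : Type*} [MeasurableSpace X] (μ : Measure X)
    (h : X → ℝ) (hmeas : Measurable h) (hnonneg : ∀ x, 0 ≤ h x)
    (hfin : ∀ p : ℝ, 0 ≤ p → Integrable (fun x => h x ^ p) μ)
    (hpos : ∀ p : ℝ, 0 ≤ p → 0 < ∫ x, h x ^ p ∂μ) :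
    ∀ p ε : ℝ, 1 ≤ p → 0 < ε →
      (∫ x, h x ^ p ∂μ) / (∫ x, h x ^ (p - 1) ∂μ)
        ≤ (∫ x, h x ^ (p + ε) ∂μ) / (∫ x, h x ^ (p + ε - 1) ∂μ) := by
  intro p ε hp hε
  have hlogconv := integral_rpow_mul_integral_rpow_le hmeas.aemeasurable hnonneg
    (a := p - 1) (b := p) (c := p + ε - 1) (d := p + ε) (by linarith) (by linarith)
    (by linarith) (by ring) (hfin _ (by linarith)) (hfin _ (by linarith))
  rw [div_le_div_iff₀ (hpos _ (by linarith)) (hpos _ (by linarith))]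
  linarith

/-- F(p) = (∫ h^p)/(∫ h^{p−1}) satisfies F(p) ≤ F(p+ε) for all ε > 0, p ≥ 1. -/
theorem stmt_16 {X : Type*} [MeasurableSpace X] (μ : Measure X) [IsFiniteMeasure μ]
    (h : X → ℝ) (hmeas : Measurable h) (hnonneg : ∀ x, 0 ≤ h x)
    (M : ℝ) (hbound : ∀ x, h x ≤ M)
    (hfin : ∀ p : ℝ, 0 ≤ p → Integrable (fun x => h x ^ p) μ)
    (hpos : ∀ p : ℝ, 0 ≤ p → 0 < ∫ x, h x ^ p ∂μ) :
    ∀ p ε : ℝ, 1 ≤ p → 0 < ε →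
      (∫ x, h x ^ p ∂μ) / (∫ x, h x ^ (p - 1) ∂μ)
        ≤ (∫ x, h x ^ (p + ε) ∂μ) / (∫ x, h x ^ (p + ε - 1) ∂μ) :=
  stmt_16_general μ h hmeas hnonneg hfin hpos
end
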